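/- arXiv:1203.2474 — 5 statements merged into one kernel-verified Lean document; each statement's English description precedes it below -/
import Mathlib

section
/- Let D be a weak braided Hopf algebra and (r_M, r'_M, s_M, s'_M) an (M,D)-weak operator. Then the morphisms ∇_{r_M} := r'_M ∘ r_M, ∇_{r'_M} := r_M ∘ r'_M, ∇_{s_M} := s'_M ∘ s_M and ∇_{s'_M} := s_M ∘ s'_M are idempotent. -/
open CategoryTheory MonoidalCategory

variable {C : Type*} [Category C] [MonoidalCategory C]

/-- Whisker a morphism between binary tensor products into the first two factors
of a right-nested triple tensor product (strict monoidal `f ⊗ Z`). -/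
def Wfst {X X' Y Y' : C} (f : X ⊗ Y ⟶ X' ⊗ Y') (Z : C) :
    X ⊗ (Y ⊗ Z) ⟶ X' ⊗ (Y' ⊗ Z) :=
  (α_ X Y Z).inv ≫ (f ▷ Z) ≫ (α_ X' Y' Z).hom

/-- `η ⊗ M` in a strict monoidal category. -/
def unitHomL {X : C} (e : 𝟙_ C ⟶ X) (M : C) : M ⟶ X ⊗ M := (λ_ M).inv ≫ e ▷ M

/-- `M ⊗ η` in a strict monoidal category. -/
def unitHomR {X : C} (e : 𝟙_ C ⟶ X) (M : C) : M ⟶ M ⊗ X := (ρ_ M).inv ≫ M ◁ e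

/-- `ε ⊗ M` in a strict monoidal category. -/
def counitHomL {X : C} (e : X ⟶ 𝟙_ C) (M : C) : X ⊗ M ⟶ M := e ▷ M ≫ (λ_ M).hom

/-- `M ⊗ ε` in a strict monoidal category. -/
def counitHomR {X : C} (e : X ⟶ 𝟙_ C) (M : C) : M ⊗ X ⟶ M := M ◁ e ≫ (ρ_ M).hom

/-- A weak Yang-Baxter operator on `D`: `t` satisfies the Yang–Baxter equation,
`nb` is an associated idempotent (conditions (a2-1)–(a2-4)), and `t'` is a partial
inverse of `t` ((a3-1) and (a3-2)), where the splitting of `nb` required by (a3-1)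
is asserted to exist. -/
structure IsWYB {D : C} (t t' nb : D ⊗ D ⟶ D ⊗ D) : Prop where
  yb : Wfst t D ≫ (D ◁ t) ≫ Wfst t D = (D ◁ t) ≫ Wfst t D ≫ (D ◁ t)
  nb_idem : nb ≫ nb = nb
  a21 : (D ◁ nb) ≫ Wfst nb D = Wfst nb D ≫ (D ◁ nb)
  a22 : (D ◁ t) ≫ Wfst nb D = Wfst nb D ≫ (D ◁ t)
  a23 : (D ◁ nb) ≫ Wfst t D = Wfst t D ≫ (D ◁ nb)
  a24l : nb ≫ t = t
  a24r : t ≫ nb = t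
  a32l : nb ≫ t' = t'
  a32r : t' ≫ nb = t'
  a31 : ∃ (P : C) (p : D ⊗ D ⟶ P) (i : P ⟶ D ⊗ D),
      p ≫ i = nb ∧ i ≫ p = 𝟙 P ∧
      (i ≫ t ≫ p) ≫ (i ≫ t' ≫ p) = 𝟙 P ∧ (i ≫ t' ≫ p) ≫ (i ≫ t ≫ p) = 𝟙 P

variable (D : C) in
/-- A weak braided Hopf algebra in a strict monoidal category: an algebra-coalgebra
`(D, η, μ, ε, δ)` with a weak Yang-Baxter operator `t` (with partial inverse `t'`
and associated idempotent `nb`) satisfying axioms (b1)-(b7), with antipode `S`. -/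
structure WBHA where
  η : 𝟙_ C ⟶ D
  μ : D ⊗ D ⟶ D
  ε : D ⟶ 𝟙_ C
  δ : D ⟶ D ⊗ D
  S : D ⟶ D
  t : D ⊗ D ⟶ D ⊗ D
  t' : D ⊗ D ⟶ D ⊗ D
  nb : D ⊗ D ⟶ D ⊗ D
  wyb : IsWYB t t' nb
  unit_l : unitHomL η D ≫ μ = 𝟙 D
  unit_r : unitHomR η D ≫ μ = 𝟙 D
  mul_assoc : D ◁ μ ≫ μ = (α_ D D D).inv ≫ μ ▷ D ≫ μ
  counit_l : δ ≫ counitHomL ε D = 𝟙 D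
  counit_r : δ ≫ counitHomR ε D = 𝟙 D
  coassoc : δ ≫ D ◁ δ = δ ≫ δ ▷ D ≫ (α_ D D D).hom
  b11 : nb ≫ μ = μ
  b12 : ((α_ D D D).inv ≫ μ ▷ D) ≫ nb = D ◁ nb ≫ (α_ D D D).inv ≫ μ ▷ D
  b13 : D ◁ μ ≫ nb = Wfst nb D ≫ D ◁ μ
  b21 : δ ≫ nb = δ
  b22 : nb ≫ δ ▷ D ≫ (α_ D D D).hom = (δ ▷ D ≫ (α_ D D D).hom) ≫ D ◁ nb
  b23 : nb ≫ D ◁ δ = D ◁ δ ≫ Wfst nb D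
  b31 : ((α_ D D D).inv ≫ μ ▷ D) ≫ t = D ◁ t ≫ Wfst t D ≫ D ◁ μ
  b32 : D ◁ μ ≫ t = Wfst t D ≫ D ◁ t ≫ (α_ D D D).inv ≫ μ ▷ D
  b33 : t ≫ δ ▷ D ≫ (α_ D D D).hom = D ◁ δ ≫ Wfst t D ≫ D ◁ t
  b34 : t ≫ D ◁ δ = (δ ▷ D ≫ (α_ D D D).hom) ≫ D ◁ t ≫ Wfst t D
  b4 : μ ≫ δ = (δ ⊗ₘ δ) ≫ (α_ D D (D ⊗ D)).hom ≫ D ◁ Wfst t D ≫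
      (α_ D D (D ⊗ D)).inv ≫ (μ ⊗ₘ μ)
  b51 : ((α_ D D D).inv ≫ μ ▷ D) ≫ μ ≫ ε =
      D ◁ (δ ▷ D ≫ (α_ D D D).hom) ≫ (α_ D D (D ⊗ D)).inv ≫
        ((μ ≫ ε) ⊗ₘ (μ ≫ ε)) ≫ (λ_ (𝟙_ C)).hom
  b52 : ((α_ D D D).inv ≫ μ ▷ D) ≫ μ ≫ ε =
      D ◁ ((δ ≫ t') ▷ D ≫ (α_ D D D).hom) ≫ (α_ D D (D ⊗ D)).inv ≫
        ((μ ≫ ε) ⊗ₘ (μ ≫ ε)) ≫ (λ_ (𝟙_ C)).hom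
  b61 : η ≫ δ ≫ δ ▷ D ≫ (α_ D D D).hom =
      (λ_ (𝟙_ C)).inv ≫ ((η ≫ δ) ⊗ₘ (η ≫ δ)) ≫ (α_ D D (D ⊗ D)).hom ≫
        D ◁ ((α_ D D D).inv ≫ μ ▷ D)
  b62 : η ≫ δ ≫ δ ▷ D ≫ (α_ D D D).hom =
      (λ_ (𝟙_ C)).inv ≫ ((η ≫ δ) ⊗ₘ (η ≫ δ)) ≫ (α_ D D (D ⊗ D)).hom ≫
        D ◁ ((α_ D D D).inv ≫ (t' ≫ μ) ▷ D)
  b71 : δ ≫ (𝟙 D ⊗ₘ S) ≫ μ =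
      (λ_ D).inv ≫ (η ≫ δ) ▷ D ≫ (α_ D D D).hom ≫ D ◁ t ≫
        (α_ D D D).inv ≫ (μ ≫ ε) ▷ D ≫ (λ_ D).hom
  b72 : δ ≫ (S ⊗ₘ 𝟙 D) ≫ μ =
      (ρ_ D).inv ≫ D ◁ (η ≫ δ) ≫ Wfst t D ≫ D ◁ (μ ≫ ε) ≫ (ρ_ D).hom
  b73 : δ ≫ (S ⊗ₘ (δ ≫ (𝟙 D ⊗ₘ S) ≫ μ)) ≫ μ = S

section WeakOperatorDefs

variable {D M : C}

/-- Hexagon-type compatibility of `t : D⊗D ⟶ D⊗D` with `a : M⊗D ⟶ D⊗M`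
(conditions (c1-1), (c1-4)). -/
def hexMD (t : D ⊗ D ⟶ D ⊗ D) (a : M ⊗ D ⟶ D ⊗ M) : Prop :=
  M ◁ t ≫ Wfst a D ≫ D ◁ a = Wfst a D ≫ D ◁ a ≫ Wfst t M

/-- Hexagon-type compatibility of `t` with `b : D⊗M ⟶ M⊗D` ((c1-2), (c1-3)). -/
def hexDM (t : D ⊗ D ⟶ D ⊗ D) (b : D ⊗ M ⟶ M ⊗ D) : Prop :=
  Wfst t M ≫ D ◁ b ≫ Wfst b D = D ◁ b ≫ Wfst b D ≫ M ◁ t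

/-- Mixed Yang-Baxter equation shape ((c2-1), (c2-2)). -/
def mixDM (t : D ⊗ D ⟶ D ⊗ D) (b c : D ⊗ M ⟶ M ⊗ D) : Prop :=
  Wfst t M ≫ D ◁ c ≫ Wfst b D = D ◁ b ≫ Wfst c D ≫ M ◁ t

/-- Mixed Yang-Baxter equation shape ((c2-3), (c2-4)). -/
def mixMD (t : D ⊗ D ⟶ D ⊗ D) (a c : M ⊗ D ⟶ D ⊗ M) : Prop :=
  M ◁ t ≫ Wfst a D ≫ D ◁ c = Wfst c D ≫ D ◁ a ≫ Wfst t M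

end WeakOperatorDefs

variable {D : C} (H : WBHA D) (M : C) in
/-- An `(M,D)`-weak operator for a weak braided Hopf algebra `D`: a quadruple
`(r, r', s, s')` satisfying the compatibility conditions (c1)-(c5). -/
structure WeakOperator where
  r : M ⊗ D ⟶ D ⊗ M
  r' : D ⊗ M ⟶ M ⊗ D
  s : D ⊗ M ⟶ M ⊗ D
  s' : M ⊗ D ⟶ D ⊗ M
  c11 : hexMD H.t r
  c12 : hexDM H.t r'
  c13 : hexDM H.t s
  c14 : hexMD H.t s'
  c11' : hexMD H.t' r
  c12' : hexDM H.t' r'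
  c13' : hexDM H.t' s
  c14' : hexMD H.t' s'
  c21 : mixDM H.t r' s
  c22 : mixDM H.t' s r'
  c23 : mixMD H.t r s'
  c24 : mixMD H.t' s' r
  c31a : r ≫ r' = M ◁ H.δ ≫ (α_ M D D).inv ≫ (r ≫ counitHomL H.ε M) ▷ D
  c31b : r ≫ r' = (unitHomL H.η M ≫ r') ▷ D ≫ (α_ M D D).hom ≫ M ◁ H.μ
  c32a : r' ≫ r = H.δ ▷ M ≫ (α_ D D M).hom ≫ D ◁ (r' ≫ counitHomR H.ε M)
  c32b : r' ≫ r = D ◁ (unitHomR H.η M ≫ r) ≫ (α_ D D M).inv ≫ H.μ ▷ M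
  c33a : s ≫ s' = H.δ ▷ M ≫ (α_ D D M).hom ≫ D ◁ (s ≫ counitHomR H.ε M)
  c33b : s ≫ s' = D ◁ (unitHomR H.η M ≫ s') ≫ (α_ D D M).inv ≫ H.μ ▷ M
  c34a : s' ≫ s = M ◁ H.δ ≫ (α_ M D D).inv ≫ (s' ≫ counitHomL H.ε M) ▷ D
  c34b : s' ≫ s = (unitHomL H.η M ≫ s) ▷ D ≫ (α_ M D D).hom ≫ M ◁ H.μ
  c41 : M ◁ H.μ ≫ r = Wfst r D ≫ D ◁ r ≫ (α_ D D M).inv ≫ H.μ ▷ M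
  c42 : ((α_ D D M).inv ≫ H.μ ▷ M) ≫ r' = D ◁ r' ≫ Wfst r' D ≫ M ◁ H.μ
  c43 : M ◁ H.δ ≫ Wfst r D ≫ D ◁ r = r ≫ H.δ ▷ M ≫ (α_ D D M).hom
  c44 : (H.δ ▷ M ≫ (α_ D D M).hom) ≫ D ◁ r' ≫ Wfst r' D = r' ≫ M ◁ H.δ
  c45 : ((α_ D D M).inv ≫ H.μ ▷ M) ≫ s = D ◁ s ≫ Wfst s D ≫ M ◁ H.μ
  c46 : M ◁ H.μ ≫ s' = Wfst s' D ≫ D ◁ s' ≫ (α_ D D M).inv ≫ H.μ ▷ M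
  c47 : (H.δ ▷ M ≫ (α_ D D M).hom) ≫ D ◁ s ≫ Wfst s D = s ≫ M ◁ H.δ
  c48 : M ◁ H.δ ≫ Wfst s' D ≫ D ◁ s' = s' ≫ H.δ ▷ M ≫ (α_ D D M).hom
  c51 : (r ≫ r') ≫ M ◁ H.S = M ◁ H.S ≫ (r ≫ r')
  c52 : (r' ≫ r) ≫ H.S ▷ M = H.S ▷ M ≫ (r' ≫ r)
  c53 : (s ≫ s') ≫ H.S ▷ M = H.S ▷ M ≫ (s ≫ s')
  c54 : (s' ≫ s) ≫ M ◁ H.S = M ◁ H.S ≫ (s' ≫ s)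

/-! Both nablas built from `r` are idempotent as soon as `r ≫ r' ≫ r = r`. For this, write
`r' ≫ r` by (c3) as `δ ▷ M` followed by `r' ≫ (M ⊗ ε)`. Comultiplicativity (c4) of `r` moves
`δ` in front of two copies of `r`; the second one meets `r'`, and by (c3) again
`(r ≫ r') ≫ (M ⊗ ε) = r ≫ (ε ⊗ M)`, after which the counit axiom leaves `r`.
The mirrored argument handles `s`. -/

theorem comp_idem_of_comp_comp_eq_self {𝒞 : Type*} [Category 𝒞] {X Y : 𝒞}
    {f : X ⟶ Y} {g : Y ⟶ X} (h : f ≫ g ≫ f = f) :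
    (f ≫ g) ≫ (f ≫ g) = f ≫ g ∧ (g ≫ f) ≫ (g ≫ f) = g ≫ f :=
  ⟨by rw [Category.assoc, reassoc_of% h], by rw [Category.assoc, h]⟩

section Counit

variable {D : C} {δ : D ⟶ D ⊗ D} {ε : D ⟶ 𝟙_ C}

lemma whiskerLeft_comul_comp_counitHomR (h : δ ≫ counitHomR ε D = 𝟙 D) {M N : C}
    (f : M ⊗ D ⟶ N) : M ◁ δ ≫ (α_ M D D).inv ≫ f ▷ D ≫ counitHomR ε N = f := by
  simp only [counitHomR] at h ⊢
  rw [← whisker_exchange_assoc, rightUnitor_naturality,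
    ← associator_inv_naturality_right_assoc, ← whiskerLeft_rightUnitor_assoc,
    ← MonoidalCategory.whiskerLeft_comp_assoc, ← MonoidalCategory.whiskerLeft_comp_assoc,
    Category.assoc, h, MonoidalCategory.whiskerLeft_id, Category.id_comp]

lemma comul_whiskerRight_comp_counitHomL (h : δ ≫ counitHomL ε D = 𝟙 D) {M N : C}
    (f : D ⊗ M ⟶ N) : δ ▷ M ≫ (α_ D D M).hom ≫ D ◁ f ≫ counitHomL ε N = f := by
  simp only [counitHomL] at h ⊢
  rw [whisker_exchange_assoc, leftUnitor_naturality,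
    ← associator_naturality_left_assoc, ← leftUnitor_whiskerRight_assoc,
    ← comp_whiskerRight_assoc, ← comp_whiskerRight_assoc,
    Category.assoc, h, id_whiskerRight, Category.id_comp]

lemma whiskerLeft_comul_comp_counitHomR_whiskerRight (h : δ ≫ counitHomL ε D = 𝟙 D)
    (M : C) : M ◁ δ ≫ (α_ M D D).inv ≫ counitHomR ε M ▷ D = 𝟙 (M ⊗ D) := by
  simp only [counitHomL] at h
  simp only [counitHomR, comp_whiskerRight]
  rw [← associator_inv_naturality_middle_assoc, triangle_assoc_comp_right,
    ← MonoidalCategory.whiskerLeft_comp, ← MonoidalCategory.whiskerLeft_comp,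
    h, MonoidalCategory.whiskerLeft_id]

lemma comul_whiskerRight_comp_whiskerLeft_counitHomL (h : δ ≫ counitHomR ε D = 𝟙 D)
    (M : C) : δ ▷ M ≫ (α_ D D M).hom ≫ D ◁ counitHomL ε M = 𝟙 (D ⊗ M) := by
  simp only [counitHomR] at h
  simp only [counitHomL, MonoidalCategory.whiskerLeft_comp]
  rw [← associator_naturality_middle_assoc, triangle,
    ← comp_whiskerRight, ← comp_whiskerRight, h, id_whiskerRight]

end Counit

namespace WeakOperator

variable {D : C} {H : WBHA D} {M : C} (w : WeakOperator H M)

lemma r_comp_r'_comp_counitHomR :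
    (w.r ≫ w.r') ≫ counitHomR H.ε M = w.r ≫ counitHomL H.ε M := by
  rw [w.c31a, Category.assoc, Category.assoc,
    whiskerLeft_comul_comp_counitHomR H.counit_r]

lemma s_comp_s'_comp_counitHomL :
    (w.s ≫ w.s') ≫ counitHomL H.ε M = w.s ≫ counitHomR H.ε M := by
  rw [w.c33a, Category.assoc, Category.assoc,
    comul_whiskerRight_comp_counitHomL H.counit_l]

lemma r_comp_r'_comp_r : w.r ≫ w.r' ≫ w.r = w.r := by
  have c43 : w.r ≫ H.δ ▷ M ≫ (α_ D D M).hom = M ◁ H.δ ≫ Wfst w.r D ≫ D ◁ w.r :=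
    w.c43.symm
  calc w.r ≫ w.r' ≫ w.r
      = (w.r ≫ H.δ ▷ M ≫ (α_ D D M).hom) ≫ D ◁ (w.r' ≫ counitHomR H.ε M) := by
        rw [w.c32a]; simp only [Category.assoc]
    _ = M ◁ H.δ ≫ Wfst w.r D ≫ D ◁ ((w.r ≫ w.r') ≫ counitHomR H.ε M) := by
        rw [c43]; simp only [Category.assoc, MonoidalCategory.whiskerLeft_comp]
    _ = (w.r ≫ H.δ ▷ M ≫ (α_ D D M).hom) ≫ D ◁ counitHomL H.ε M := by
        rw [r_comp_r'_comp_counitHomR, c43]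
        simp only [Category.assoc, MonoidalCategory.whiskerLeft_comp]
    _ = w.r := by
        rw [Category.assoc, Category.assoc,
          comul_whiskerRight_comp_whiskerLeft_counitHomL H.counit_r, Category.comp_id]

lemma s_comp_s'_comp_s : w.s ≫ w.s' ≫ w.s = w.s := by
  have c47 : w.s ≫ M ◁ H.δ = H.δ ▷ M ≫ (α_ D D M).hom ≫ D ◁ w.s ≫ Wfst w.s D := by
    rw [← w.c47, Category.assoc]
  calc w.s ≫ w.s' ≫ w.s
      = (w.s ≫ M ◁ H.δ) ≫ (α_ M D D).inv ≫ (w.s' ≫ counitHomL H.ε M) ▷ D := by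
        rw [w.c34a]; simp only [Category.assoc]
    _ = H.δ ▷ M ≫ (α_ D D M).hom ≫ D ◁ w.s ≫ (α_ D M D).inv ≫
          ((w.s ≫ w.s') ≫ counitHomL H.ε M) ▷ D := by
        rw [c47]
        simp only [Wfst, Category.assoc, Iso.hom_inv_id_assoc, comp_whiskerRight]
    _ = (w.s ≫ M ◁ H.δ) ≫ (α_ M D D).inv ≫ counitHomR H.ε M ▷ D := by
        rw [s_comp_s'_comp_counitHomL, c47]
        simp only [Wfst, Category.assoc, Iso.hom_inv_id_assoc, comp_whiskerRight]
    _ = w.s := by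
        rw [Category.assoc,
          whiskerLeft_comul_comp_counitHomR_whiskerRight H.counit_l, Category.comp_id]

end WeakOperator

/-- For an `(M,D)`-weak operator over a weak braided Hopf algebra `D`, the
morphisms `∇_{r} = r'∘r`, `∇_{r'} = r∘r'`, `∇_{s} = s'∘s`, `∇_{s'} = s∘s'`
are idempotent. -/
theorem weakOperator_nablas_idempotent {D : C} (H : WBHA D) (M : C)
    (w : WeakOperator H M) :
    (w.r ≫ w.r') ≫ (w.r ≫ w.r') = w.r ≫ w.r' ∧
    (w.r' ≫ w.r) ≫ (w.r' ≫ w.r) = w.r' ≫ w.r ∧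
    (w.s ≫ w.s') ≫ (w.s ≫ w.s') = w.s ≫ w.s' ∧
    (w.s' ≫ w.s) ≫ (w.s' ≫ w.s) = w.s' ≫ w.s := by
  obtain ⟨hrr', hr'r⟩ := comp_idem_of_comp_comp_eq_self w.r_comp_r'_comp_r
  obtain ⟨hss', hs's⟩ := comp_idem_of_comp_comp_eq_self w.s_comp_s'_comp_s
  exact ⟨hrr', hr'r, hss', hs's⟩
end

section
/- Let D be a weak braided Hopf algebra and (r_M, r'_M, s_M, s'_M) an (M,D)-weak operator. Then the cancellation laws hold: r_M = ∇_{r'_M} ∘ r_M = r_M ∘ ∇_{r_M}, r'_M = r'_M ∘ ∇_{r'_M} = ∇_{r_M} ∘ r'_M, s_M = ∇_{s'_M} ∘ s_M = s_M ∘ ∇_{s_M}, and s'_M = s'_M ∘ ∇_{s'_M} = ∇_{s_M} ∘ s'_M. -/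
open CategoryTheory MonoidalCategory

variable {C : Type*} [Category C] [MonoidalCategory C]

/-! Each cancellation law follows by rewriting the composite `∇` with whichever of its two
descriptions in (c3) involves the unit or counit on the side facing the operator: the
(co)multiplicativity of the operator from (c4) then moves it past the operator, where the
(co)unit law of `D` makes it disappear. -/

section Cancellation

lemma unitHomL_naturality {E A B : C} (e : 𝟙_ C ⟶ E) (g : A ⟶ B) :
    g ≫ unitHomL e B = unitHomL e A ≫ E ◁ g := by
  rw [unitHomL, unitHomL, leftUnitor_inv_naturality_assoc, whisker_exchange, Category.assoc]

lemma unitHomR_naturality {E A B : C} (e : 𝟙_ C ⟶ E) (g : A ⟶ B) :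
    g ≫ unitHomR e B = unitHomR e A ≫ g ▷ E := by
  simp [unitHomR, whisker_exchange]

lemma counitHomL_naturality {E A B : C} (e : E ⟶ 𝟙_ C) (g : A ⟶ B) :
    counitHomL e A ≫ g = E ◁ g ≫ counitHomL e B := by
  simp only [counitHomL, whisker_exchange_assoc, Category.assoc, leftUnitor_naturality]

lemma counitHomR_naturality {E A B : C} (e : E ⟶ 𝟙_ C) (g : A ⟶ B) :
    counitHomR e A ≫ g = g ▷ E ≫ counitHomR e B := by
  simp only [counitHomR, ← whisker_exchange_assoc, Category.assoc, rightUnitor_naturality]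

lemma unitHomL_whiskerRight {E X Z : C} (e : 𝟙_ C ⟶ E) :
    unitHomL e X ▷ Z = unitHomL e (X ⊗ Z) ≫ (α_ E X Z).inv := by
  simp [unitHomL]

lemma whiskerLeft_unitHomR {E X Z : C} (e : 𝟙_ C ⟶ E) :
    X ◁ unitHomR e Z = unitHomR e (X ⊗ Z) ≫ (α_ X Z E).hom := by
  simp [unitHomR]

lemma counitHomL_whiskerRight {E X Z : C} (e : E ⟶ 𝟙_ C) :
    counitHomL e X ▷ Z = (α_ E X Z).hom ≫ counitHomL e (X ⊗ Z) := by
  simp [counitHomL]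

lemma whiskerLeft_counitHomR {E X Z : C} (e : E ⟶ 𝟙_ C) :
    X ◁ counitHomR e Z = (α_ X Z E).inv ≫ counitHomR e (X ⊗ Z) := by
  simp [counitHomR]

variable {D M : C}

-- The composites `∇` in the shapes in which they appear on the right-hand sides of (c3).
def mulUnitR (η : 𝟙_ C ⟶ D) (μ : D ⊗ D ⟶ D) (a : M ⊗ D ⟶ D ⊗ M) : D ⊗ M ⟶ D ⊗ M :=
  D ◁ (unitHomR η M ≫ a) ≫ (α_ D D M).inv ≫ μ ▷ M

def mulUnitL (η : 𝟙_ C ⟶ D) (μ : D ⊗ D ⟶ D) (b : D ⊗ M ⟶ M ⊗ D) : M ⊗ D ⟶ M ⊗ D :=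
  (unitHomL η M ≫ b) ▷ D ≫ (α_ M D D).hom ≫ M ◁ μ

def comulCounitL (ε : D ⟶ 𝟙_ C) (δ : D ⟶ D ⊗ D) (a : M ⊗ D ⟶ D ⊗ M) : M ⊗ D ⟶ M ⊗ D :=
  M ◁ δ ≫ (α_ M D D).inv ≫ (a ≫ counitHomL ε M) ▷ D

def comulCounitR (ε : D ⟶ 𝟙_ C) (δ : D ⟶ D ⊗ D) (b : D ⊗ M ⟶ M ⊗ D) : D ⊗ M ⟶ D ⊗ M :=
  δ ▷ M ≫ (α_ D D M).hom ≫ D ◁ (b ≫ counitHomR ε M)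

lemma comp_mulUnitR_eq_self {η : 𝟙_ C ⟶ D} {μ : D ⊗ D ⟶ D}
    (hu : unitHomR η D ≫ μ = 𝟙 D) {a : M ⊗ D ⟶ D ⊗ M}
    (h : M ◁ μ ≫ a = Wfst a D ≫ D ◁ a ≫ (α_ D D M).inv ≫ μ ▷ M) :
    a ≫ mulUnitR η μ a = a := by
  have unit_past_a : a ≫ D ◁ unitHomR η M = M ◁ unitHomR η D ≫ Wfst a D := by
    rw [whiskerLeft_unitHomR, whiskerLeft_unitHomR, Wfst, ← Category.assoc, unitHomR_naturality]
    simp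
  calc a ≫ mulUnitR η μ a
      = (a ≫ D ◁ unitHomR η M) ≫ D ◁ a ≫ (α_ D D M).inv ≫ μ ▷ M := by
        simp [mulUnitR]
    _ = M ◁ unitHomR η D ≫ (Wfst a D ≫ D ◁ a ≫ (α_ D D M).inv ≫ μ ▷ M) := by
        rw [unit_past_a]; simp
    _ = M ◁ (unitHomR η D ≫ μ) ≫ a := by rw [← h]; simp
    _ = a := by rw [hu]; simp

lemma comp_mulUnitL_eq_self {η : 𝟙_ C ⟶ D} {μ : D ⊗ D ⟶ D}
    (hu : unitHomL η D ≫ μ = 𝟙 D) {b : D ⊗ M ⟶ M ⊗ D}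
    (h : ((α_ D D M).inv ≫ μ ▷ M) ≫ b = D ◁ b ≫ Wfst b D ≫ M ◁ μ) :
    b ≫ mulUnitL η μ b = b := by
  have unit_past_b : b ≫ unitHomL η M ▷ D = unitHomL η (D ⊗ M) ≫ D ◁ b ≫ (α_ D M D).inv := by
    rw [unitHomL_whiskerRight, ← Category.assoc, unitHomL_naturality]
    simp
  calc b ≫ mulUnitL η μ b
      = (b ≫ unitHomL η M ▷ D) ≫ b ▷ D ≫ (α_ M D D).hom ≫ M ◁ μ := by
        simp [mulUnitL]
    _ = unitHomL η (D ⊗ M) ≫ (D ◁ b ≫ Wfst b D ≫ M ◁ μ) := by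
        rw [unit_past_b]; simp [Wfst]
    _ = (unitHomL η D ≫ μ) ▷ M ≫ b := by
        rw [← h, comp_whiskerRight, unitHomL_whiskerRight]; simp
    _ = b := by rw [hu]; simp

lemma comulCounitL_comp_eq_self {ε : D ⟶ 𝟙_ C} {δ : D ⟶ D ⊗ D}
    (hc : δ ≫ counitHomL ε D = 𝟙 D) {a : M ⊗ D ⟶ D ⊗ M}
    (h : M ◁ δ ≫ Wfst a D ≫ D ◁ a = a ≫ δ ▷ M ≫ (α_ D D M).hom) :
    comulCounitL ε δ a ≫ a = a := by
  have counit_past_a :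
      counitHomL ε M ▷ D ≫ a = (α_ D M D).hom ≫ D ◁ a ≫ counitHomL ε (D ⊗ M) := by
    rw [counitHomL_whiskerRight, Category.assoc, counitHomL_naturality]
  calc comulCounitL ε δ a ≫ a
      = M ◁ δ ≫ (α_ M D D).inv ≫ a ▷ D ≫ (counitHomL ε M ▷ D ≫ a) := by
        simp [comulCounitL]
    _ = (M ◁ δ ≫ Wfst a D ≫ D ◁ a) ≫ counitHomL ε (D ⊗ M) := by
        rw [counit_past_a]; simp [Wfst]
    _ = a ≫ (δ ≫ counitHomL ε D) ▷ M := by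
        rw [h, comp_whiskerRight, counitHomL_whiskerRight]; simp
    _ = a := by rw [hc]; simp

lemma comulCounitR_comp_eq_self {ε : D ⟶ 𝟙_ C} {δ : D ⟶ D ⊗ D}
    (hc : δ ≫ counitHomR ε D = 𝟙 D) {b : D ⊗ M ⟶ M ⊗ D}
    (h : (δ ▷ M ≫ (α_ D D M).hom) ≫ D ◁ b ≫ Wfst b D = b ≫ M ◁ δ) :
    comulCounitR ε δ b ≫ b = b := by
  have counit_past_b : D ◁ counitHomR ε M ≫ b = Wfst b D ≫ M ◁ counitHomR ε D := by
    rw [whiskerLeft_counitHomR, Category.assoc, counitHomR_naturality, whiskerLeft_counitHomR,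
      Wfst]
    simp
  calc comulCounitR ε δ b ≫ b
      = (δ ▷ M ≫ (α_ D D M).hom) ≫ D ◁ b ≫ (D ◁ counitHomR ε M ≫ b) := by
        simp [comulCounitR]
    _ = b ≫ M ◁ (δ ≫ counitHomR ε D) := by
        rw [counit_past_b, MonoidalCategory.whiskerLeft_comp, ← Category.assoc b, ← h]; simp
    _ = b := by rw [hc]; simp

end Cancellation

/-- Cancellation laws for an `(M,D)`-weak operator:
`r = ∇_{r'}∘r = r∘∇_{r}`, `r' = r'∘∇_{r'} = ∇_{r}∘r'`,
`s = ∇_{s'}∘s = s∘∇_{s}`, `s' = s'∘∇_{s'} = ∇_{s}∘s'`. -/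
theorem weakOperator_cancellation {D : C} (H : WBHA D) (M : C)
    (w : WeakOperator H M) :
    (w.r ≫ (w.r' ≫ w.r) = w.r ∧ (w.r ≫ w.r') ≫ w.r = w.r) ∧
    ((w.r' ≫ w.r) ≫ w.r' = w.r' ∧ w.r' ≫ (w.r ≫ w.r') = w.r') ∧
    (w.s ≫ (w.s' ≫ w.s) = w.s ∧ (w.s ≫ w.s') ≫ w.s = w.s) ∧
    ((w.s' ≫ w.s) ≫ w.s' = w.s' ∧ w.s' ≫ (w.s ≫ w.s') = w.s') := by
  refine ⟨⟨?_, ?_⟩, ⟨?_, ?_⟩, ⟨?_, ?_⟩, ⟨?_, ?_⟩⟩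
  · rw [w.c32b]; exact comp_mulUnitR_eq_self H.unit_r w.c41
  · rw [w.c31a]; exact comulCounitL_comp_eq_self H.counit_l w.c43
  · rw [w.c32a]; exact comulCounitR_comp_eq_self H.counit_r w.c44
  · rw [w.c31b]; exact comp_mulUnitL_eq_self H.unit_l w.c42
  · rw [w.c34b]; exact comp_mulUnitL_eq_self H.unit_l w.c45
  · rw [w.c33a]; exact comulCounitR_comp_eq_self H.counit_r w.c47
  · rw [w.c34a]; exact comulCounitL_comp_eq_self H.counit_l w.c48
  · rw [w.c33b]; exact comp_mulUnitR_eq_self H.unit_r w.c46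
end

section
/- Let D be a weak braided Hopf algebra and (r_M, r'_M, s_M, s'_M) an (M,D)-weak operator. Then (r_M⊗D)∘(M⊗(δ_D∘η_D)) = (D⊗r'_M)∘((δ_D∘η_D)⊗M), and dually ((ε_D∘μ_D)⊗M)∘(D⊗r_M) = (M⊗(ε_D∘μ_D))∘(r'_M⊗D). -/
open CategoryTheory MonoidalCategory

variable {C : Type*} [Category C] [MonoidalCategory C]

/-!
The idempotent `∇ = r'_M ∘ r_M` carries one side of the first equation to the other. The
cancellation law `r_M ∘ ∇ = r_M` together with `(M⊗δ) ∘ ∇ = (∇⊗D) ∘ (M⊗δ)` inserts `∇` in front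
of `M⊗η`, and `∇ ∘ (M⊗η) = r'_M ∘ (η⊗M)` moves the unit to the left. By (c4-4),
`(r_M⊗D) ∘ (M⊗δ) ∘ r'_M` is `(∇_{r'_M}⊗D) ∘ (D⊗r'_M) ∘ (δ⊗M)`, and `∇_{r'_M}⊗D` is absorbed by
`(D⊗r'_M) ∘ (δ⊗M)` through coassociativity and the counit. The second equation is the dual
argument, with `μ`, `ε`, (c4-1) and associativity in place of `δ`, `η`, (c4-4) and
coassociativity.
-/

section Wfst

variable {X X' X'' Y Y' Y'' : C}

lemma Wfst_comp (f : X ⊗ Y ⟶ X' ⊗ Y') (g : X' ⊗ Y' ⟶ X'' ⊗ Y'') (Z : C) :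
    Wfst (f ≫ g) Z = Wfst f Z ≫ Wfst g Z := by
  simp [Wfst]

lemma Wfst_whiskerLeft_whiskerLeft (f : X ⊗ Y ⟶ X' ⊗ Y') {Z Z' : C} (g : Z ⟶ Z') :
    Wfst f Z ≫ X' ◁ Y' ◁ g = X ◁ Y ◁ g ≫ Wfst f Z' := by
  simp only [Wfst, Category.assoc]
  rw [← associator_naturality_right, ← whisker_exchange_assoc,
    ← associator_inv_naturality_right_assoc]

lemma Wfst_whiskerLeft_counitHomR (f : X ⊗ Y ⟶ X' ⊗ Y') {Z : C} (e : Z ⟶ 𝟙_ C) :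
    Wfst f Z ≫ X' ◁ counitHomR e Y' = X ◁ counitHomR e Y ≫ f := by
  rw [counitHomR, counitHomR, MonoidalCategory.whiskerLeft_comp,
    reassoc_of% Wfst_whiskerLeft_whiskerLeft]
  simp only [Wfst]
  monoidal

lemma Wfst_whiskerRight (q : X ⟶ X') (Z : C) : Wfst (q ▷ Y) Z = q ▷ (Y ⊗ Z) := by
  simp only [Wfst]
  monoidal

end Wfst

namespace WeakOperator

variable {D M : C} {H : WBHA D} (w : WeakOperator H M)

-- The paper's idempotents `∇_{r_M} = r'_M ∘ r_M` and `∇_{r'_M} = r_M ∘ r'_M`.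
def nabla : M ⊗ D ⟶ M ⊗ D := w.r ≫ w.r'

def nabla' : D ⊗ M ⟶ D ⊗ M := w.r' ≫ w.r

lemma nabla_comp_counitHomR : w.nabla ≫ counitHomR H.ε M = w.r ≫ counitHomL H.ε M := by
  calc w.nabla ≫ counitHomR H.ε M
      = (M ◁ H.δ ≫ (α_ M D D).inv ≫ (w.r ≫ counitHomL H.ε M) ▷ D) ≫
          counitHomR H.ε M := by
        rw [nabla, w.c31a]
    _ = M ◁ (H.δ ≫ counitHomR H.ε D) ≫ w.r ≫ counitHomL H.ε M := by
        simp only [counitHomR, MonoidalCategory.whiskerLeft_comp, Category.assoc]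
        rw [← whisker_exchange_assoc]
        monoidal
    _ = w.r ≫ counitHomL H.ε M := by
        rw [H.counit_r, MonoidalCategory.whiskerLeft_id, Category.id_comp]

lemma nabla'_comp_counitHomL : w.nabla' ≫ counitHomL H.ε M = w.r' ≫ counitHomR H.ε M := by
  calc w.nabla' ≫ counitHomL H.ε M
      = (H.δ ▷ M ≫ (α_ D D M).hom ≫ D ◁ (w.r' ≫ counitHomR H.ε M)) ≫
          counitHomL H.ε M := by
        rw [nabla', w.c32a]
    _ = (H.δ ≫ counitHomL H.ε D) ▷ M ≫ w.r' ≫ counitHomR H.ε M := by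
        simp only [counitHomL, comp_whiskerRight, Category.assoc]
        rw [whisker_exchange_assoc]
        monoidal
    _ = w.r' ≫ counitHomR H.ε M := by
        rw [H.counit_l, id_whiskerRight, Category.id_comp]

lemma unitHomR_comp_nabla : unitHomR H.η M ≫ w.nabla = unitHomL H.η M ≫ w.r' := by
  calc unitHomR H.η M ≫ w.nabla
      = unitHomR H.η M ≫ (unitHomL H.η M ≫ w.r') ▷ D ≫ (α_ M D D).hom ≫
          M ◁ H.μ := by
        rw [nabla, w.c31b]
    _ = (unitHomL H.η M ≫ w.r') ≫ M ◁ (unitHomR H.η D ≫ H.μ) := by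
        simp only [unitHomR, MonoidalCategory.whiskerLeft_comp, Category.assoc]
        rw [whisker_exchange_assoc]
        monoidal
    _ = unitHomL H.η M ≫ w.r' := by
        rw [H.unit_r, MonoidalCategory.whiskerLeft_id, Category.comp_id]

lemma whiskerLeft_δ_Wfst_r_whiskerLeft_nabla :
    M ◁ H.δ ≫ Wfst w.r D ≫ D ◁ w.nabla = M ◁ H.δ ≫ Wfst w.r D := by
  have recover_r : M ◁ H.δ ≫ Wfst w.r D ≫ D ◁ (w.r ≫ counitHomL H.ε M) = w.r := by
    rw [MonoidalCategory.whiskerLeft_comp, reassoc_of% w.c43,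
      show H.δ ▷ M ≫ (α_ D D M).hom ≫ D ◁ counitHomL H.ε M
          = (H.δ ≫ counitHomR H.ε D) ▷ M by
        simp only [counitHomL, counitHomR, MonoidalCategory.whiskerLeft_comp,
          comp_whiskerRight]
        monoidal,
      H.counit_r, id_whiskerRight, Category.comp_id]
  calc M ◁ H.δ ≫ Wfst w.r D ≫ D ◁ w.nabla
      = M ◁ H.δ ≫ (Wfst w.r D ≫ D ◁ M ◁ H.δ) ≫
          D ◁ (α_ M D D).inv ≫ D ◁ (w.r ≫ counitHomL H.ε M) ▷ D := by
        rw [nabla, w.c31a]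
        simp only [MonoidalCategory.whiskerLeft_comp, Category.assoc]
    _ = M ◁ (H.δ ≫ D ◁ H.δ) ≫ Wfst w.r (D ⊗ D) ≫
          D ◁ (α_ M D D).inv ≫ D ◁ (w.r ≫ counitHomL H.ε M) ▷ D := by
        rw [Wfst_whiskerLeft_whiskerLeft]
        simp only [MonoidalCategory.whiskerLeft_comp, Category.assoc]
    _ = M ◁ (H.δ ≫ H.δ ▷ D ≫ (α_ D D D).hom) ≫ Wfst w.r (D ⊗ D) ≫
          D ◁ (α_ M D D).inv ≫ D ◁ (w.r ≫ counitHomL H.ε M) ▷ D := by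
        rw [H.coassoc]
    _ = M ◁ H.δ ≫ (α_ M D D).inv ≫
          (M ◁ H.δ ≫ Wfst w.r D ≫ D ◁ (w.r ≫ counitHomL H.ε M)) ▷ D ≫
          (α_ D M D).hom := by
        simp only [Wfst, counitHomL, MonoidalCategory.whiskerLeft_comp, comp_whiskerRight,
          Category.assoc]
        monoidal
    _ = M ◁ H.δ ≫ Wfst w.r D := by
        rw [recover_r, Wfst]

lemma whiskerLeft_nabla_Wfst_r'_whiskerLeft_μ :
    D ◁ w.nabla ≫ Wfst w.r' D ≫ M ◁ H.μ = Wfst w.r' D ≫ M ◁ H.μ := by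
  have recover_r' : D ◁ (unitHomL H.η M ≫ w.r') ≫ Wfst w.r' D ≫ M ◁ H.μ = w.r' := by
    rw [MonoidalCategory.whiskerLeft_comp, Category.assoc, ← w.c42, ← Category.assoc,
      show D ◁ unitHomL H.η M ≫ ((α_ D D M).inv ≫ H.μ ▷ M)
          = (unitHomR H.η D ≫ H.μ) ▷ M by
        simp only [unitHomL, unitHomR, MonoidalCategory.whiskerLeft_comp,
          comp_whiskerRight, Category.assoc]
        monoidal,
      H.unit_r, id_whiskerRight, Category.id_comp]
  calc D ◁ w.nabla ≫ Wfst w.r' D ≫ M ◁ H.μ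
      = D ◁ (unitHomL H.η M ≫ w.r') ▷ D ≫ D ◁ (α_ M D D).hom ≫
          (D ◁ M ◁ H.μ ≫ Wfst w.r' D) ≫ M ◁ H.μ := by
        rw [nabla, w.c31b]
        simp only [MonoidalCategory.whiskerLeft_comp, Category.assoc]
    _ = D ◁ (unitHomL H.η M ≫ w.r') ▷ D ≫ D ◁ (α_ M D D).hom ≫
          Wfst w.r' (D ⊗ D) ≫ M ◁ (D ◁ H.μ ≫ H.μ) := by
        rw [← Wfst_whiskerLeft_whiskerLeft]
        simp only [MonoidalCategory.whiskerLeft_comp, Category.assoc]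
    _ = D ◁ (unitHomL H.η M ≫ w.r') ▷ D ≫ D ◁ (α_ M D D).hom ≫
          Wfst w.r' (D ⊗ D) ≫ M ◁ ((α_ D D D).inv ≫ H.μ ▷ D ≫ H.μ) := by
        rw [H.mul_assoc]
    _ = (α_ D M D).inv ≫
          (D ◁ (unitHomL H.η M ≫ w.r') ≫ Wfst w.r' D ≫ M ◁ H.μ) ▷ D ≫
          (α_ M D D).hom ≫ M ◁ H.μ := by
        simp only [Wfst, unitHomL, MonoidalCategory.whiskerLeft_comp,
          comp_whiskerRight, Category.assoc]
        monoidal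
    _ = Wfst w.r' D ≫ M ◁ H.μ := by
        rw [recover_r', Wfst, Category.assoc, Category.assoc]

lemma δ_whiskerRight_whiskerLeft_r'_Wfst_nabla' :
    H.δ ▷ M ≫ (α_ D D M).hom ≫ D ◁ w.r' ≫ Wfst w.nabla' D =
      H.δ ▷ M ≫ (α_ D D M).hom ≫ D ◁ w.r' := by
  have recover_r' :
      H.δ ▷ M ≫ (α_ D D M).hom ≫ D ◁ w.r' ≫ Wfst w.r' D ≫ M ◁ counitHomL H.ε D =
        w.r' := by
    rw [reassoc_of% w.c44, ← MonoidalCategory.whiskerLeft_comp,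
      H.counit_l, MonoidalCategory.whiskerLeft_id, Category.comp_id]
  calc H.δ ▷ M ≫ (α_ D D M).hom ≫ D ◁ w.r' ≫ Wfst w.nabla' D
      = H.δ ▷ M ≫ (α_ D D M).hom ≫ D ◁ w.r' ≫ H.δ ▷ (M ⊗ D) ≫
          Wfst (α_ D D M).hom D ≫ Wfst (D ◁ (w.r' ≫ counitHomR H.ε M)) D := by
        rw [nabla', w.c32a, Wfst_comp, Wfst_comp, Wfst_whiskerRight]
    _ = (H.δ ≫ H.δ ▷ D) ▷ M ≫ (α_ (D ⊗ D) D M).hom ≫ (D ⊗ D) ◁ w.r' ≫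
          Wfst (α_ D D M).hom D ≫ Wfst (D ◁ (w.r' ≫ counitHomR H.ε M)) D := by
        rw [whisker_exchange_assoc]
        simp only [comp_whiskerRight, Category.assoc]
        monoidal
    _ = (H.δ ≫ D ◁ H.δ ≫ (α_ D D D).inv) ▷ M ≫ (α_ (D ⊗ D) D M).hom ≫
          (D ⊗ D) ◁ w.r' ≫ Wfst (α_ D D M).hom D ≫
          Wfst (D ◁ (w.r' ≫ counitHomR H.ε M)) D := by
        rw [reassoc_of% H.coassoc, Iso.hom_inv_id, Category.comp_id]
    _ = H.δ ▷ M ≫ (α_ D D M).hom ≫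
          D ◁ (H.δ ▷ M ≫ (α_ D D M).hom ≫ D ◁ w.r' ≫ Wfst w.r' D ≫
            M ◁ counitHomL H.ε D) := by
        simp only [Wfst, counitHomL, counitHomR, MonoidalCategory.whiskerLeft_comp,
          comp_whiskerRight, Category.assoc]
        monoidal
    _ = H.δ ▷ M ≫ (α_ D D M).hom ≫ D ◁ w.r' := by
        rw [recover_r']

lemma Wfst_nabla'_whiskerLeft_r_μ_whiskerRight :
    Wfst w.nabla' D ≫ D ◁ w.r ≫ (α_ D D M).inv ≫ H.μ ▷ M =
      D ◁ w.r ≫ (α_ D D M).inv ≫ H.μ ▷ M := by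
  have recover_r :
      M ◁ unitHomL H.η D ≫ Wfst w.r D ≫ D ◁ w.r ≫ (α_ D D M).inv ≫ H.μ ▷ M =
        w.r := by
    rw [← w.c41, ← MonoidalCategory.whiskerLeft_comp_assoc, H.unit_l,
      MonoidalCategory.whiskerLeft_id, Category.id_comp]
  calc Wfst w.nabla' D ≫ D ◁ w.r ≫ (α_ D D M).inv ≫ H.μ ▷ M
      = Wfst (D ◁ (unitHomR H.η M ≫ w.r)) D ≫ Wfst (α_ D D M).inv D ≫
          H.μ ▷ (M ⊗ D) ≫ D ◁ w.r ≫ (α_ D D M).inv ≫ H.μ ▷ M := by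
        rw [nabla', w.c32b, Wfst_comp, Wfst_comp, Wfst_whiskerRight]
        simp only [Category.assoc]
    _ = Wfst (D ◁ (unitHomR H.η M ≫ w.r)) D ≫ Wfst (α_ D D M).inv D ≫
          (D ⊗ D) ◁ w.r ≫ (α_ (D ⊗ D) D M).inv ≫ (H.μ ▷ D ≫ H.μ) ▷ M := by
        rw [← whisker_exchange_assoc]
        simp only [comp_whiskerRight]
        monoidal
    _ = Wfst (D ◁ (unitHomR H.η M ≫ w.r)) D ≫ Wfst (α_ D D M).inv D ≫
          (D ⊗ D) ◁ w.r ≫ (α_ (D ⊗ D) D M).inv ≫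
          ((α_ D D D).hom ≫ D ◁ H.μ ≫ H.μ) ▷ M := by
        rw [H.mul_assoc, Iso.hom_inv_id_assoc]
    _ = D ◁ (M ◁ unitHomL H.η D ≫ Wfst w.r D ≫ D ◁ w.r ≫ (α_ D D M).inv ≫
            H.μ ▷ M) ≫ (α_ D D M).inv ≫ H.μ ▷ M := by
        simp only [Wfst, unitHomL, unitHomR, MonoidalCategory.whiskerLeft_comp,
          comp_whiskerRight, Category.assoc]
        monoidal
    _ = D ◁ w.r ≫ (α_ D D M).inv ≫ H.μ ▷ M := by
        rw [recover_r]

lemma nabla_comp_r : w.nabla ≫ w.r = w.r := by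
  calc w.nabla ≫ w.r
      = w.r ≫ H.δ ▷ M ≫ (α_ D D M).hom ≫ D ◁ (w.r' ≫ counitHomR H.ε M) := by
        rw [nabla, Category.assoc, w.c32a]
    _ = M ◁ H.δ ≫ Wfst w.r D ≫ D ◁ w.nabla ≫ D ◁ counitHomR H.ε M := by
        rw [← reassoc_of% w.c43, nabla]
        simp only [MonoidalCategory.whiskerLeft_comp, Category.assoc]
    _ = M ◁ (H.δ ≫ counitHomR H.ε D) ≫ w.r := by
        rw [reassoc_of% w.whiskerLeft_δ_Wfst_r_whiskerLeft_nabla,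
          Wfst_whiskerLeft_counitHomR, MonoidalCategory.whiskerLeft_comp_assoc]
    _ = w.r := by
        rw [H.counit_r, MonoidalCategory.whiskerLeft_id, Category.id_comp]

lemma r'_comp_nabla : w.r' ≫ w.nabla = w.r' := by
  calc w.r' ≫ w.nabla
      = H.δ ▷ M ≫ (α_ D D M).hom ≫ D ◁ w.r' ≫ Wfst w.r' D ≫
          (α_ M D D).inv ≫ (w.r ≫ counitHomL H.ε M) ▷ D := by
        rw [nabla, w.c31a, ← reassoc_of% w.c44]
    _ = H.δ ▷ M ≫ (α_ D D M).hom ≫ D ◁ w.r' ≫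
          (α_ D M D).inv ≫ (w.nabla' ≫ counitHomL H.ε M) ▷ D := by
        simp only [Wfst, nabla', comp_whiskerRight, Category.assoc, Iso.hom_inv_id_assoc]
    _ = H.δ ▷ M ≫ (α_ D D M).hom ≫ D ◁ w.r' ≫ Wfst w.r' D ≫
          (α_ M D D).inv ≫ counitHomR H.ε M ▷ D := by
        rw [nabla'_comp_counitHomL]
        simp only [Wfst, comp_whiskerRight, Category.assoc, Iso.hom_inv_id_assoc]
    _ = w.r' ≫ M ◁ (H.δ ≫ counitHomL H.ε D) := by
        rw [reassoc_of% w.c44]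
        simp only [counitHomL, counitHomR, MonoidalCategory.whiskerLeft_comp,
          comp_whiskerRight]
        monoidal
    _ = w.r' := by
        rw [H.counit_l, MonoidalCategory.whiskerLeft_id, Category.comp_id]

lemma nabla_comp_whiskerLeft_δ : w.nabla ≫ M ◁ H.δ = M ◁ H.δ ≫ Wfst w.nabla D := by
  calc w.nabla ≫ M ◁ H.δ
      = M ◁ H.δ ≫ Wfst w.r D ≫ D ◁ w.nabla ≫ Wfst w.r' D := by
        rw [nabla, Category.assoc, ← w.c44]
        simp only [← reassoc_of% w.c43, MonoidalCategory.whiskerLeft_comp, Category.assoc]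
    _ = M ◁ H.δ ≫ Wfst w.nabla D := by
        rw [reassoc_of% w.whiskerLeft_δ_Wfst_r_whiskerLeft_nabla, nabla, Wfst_comp]

lemma whiskerLeft_μ_comp_nabla : M ◁ H.μ ≫ w.nabla = Wfst w.nabla D ≫ M ◁ H.μ := by
  calc M ◁ H.μ ≫ w.nabla
      = Wfst w.r D ≫ D ◁ w.nabla ≫ Wfst w.r' D ≫ M ◁ H.μ := by
        rw [nabla, reassoc_of% w.c41, ← Category.assoc (α_ D D M).inv, w.c42]
        simp only [MonoidalCategory.whiskerLeft_comp, Category.assoc]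
    _ = Wfst w.nabla D ≫ M ◁ H.μ := by
        rw [w.whiskerLeft_nabla_Wfst_r'_whiskerLeft_μ, nabla, Wfst_comp, Category.assoc]

lemma nabla_whiskerLeft_δ_Wfst_r :
    w.nabla ≫ M ◁ H.δ ≫ Wfst w.r D = M ◁ H.δ ≫ Wfst w.r D := by
  rw [reassoc_of% w.nabla_comp_whiskerLeft_δ, ← Wfst_comp, w.nabla_comp_r]

lemma r'_whiskerLeft_δ_Wfst_r :
    w.r' ≫ M ◁ H.δ ≫ Wfst w.r D = H.δ ▷ M ≫ (α_ D D M).hom ≫ D ◁ w.r' := by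
  rw [← reassoc_of% w.c44, ← Wfst_comp]
  exact w.δ_whiskerRight_whiskerLeft_r'_Wfst_nabla'

lemma Wfst_r'_whiskerLeft_μ_nabla :
    Wfst w.r' D ≫ M ◁ H.μ ≫ w.nabla = Wfst w.r' D ≫ M ◁ H.μ := by
  rw [w.whiskerLeft_μ_comp_nabla, ← reassoc_of% Wfst_comp, w.r'_comp_nabla]

lemma Wfst_r'_whiskerLeft_μ_r :
    Wfst w.r' D ≫ M ◁ H.μ ≫ w.r = D ◁ w.r ≫ (α_ D D M).inv ≫ H.μ ▷ M := by
  rw [w.c41, ← reassoc_of% Wfst_comp]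
  exact w.Wfst_nabla'_whiskerLeft_r_μ_whiskerRight

end WeakOperator

/-- Equations (78) and (79): `(r⊗D)∘(M⊗(δ∘η)) = (D⊗r')∘((δ∘η)⊗M)` and
`((ε∘μ)⊗M)∘(D⊗r) = (M⊗(ε∘μ))∘(r'⊗D)` for an `(M,D)`-weak operator. -/
theorem weakOperator_unit_counit_exchange {D : C} (H : WBHA D) (M : C)
    (w : WeakOperator H M) :
    ((ρ_ M).inv ≫ M ◁ (H.η ≫ H.δ)) ≫ Wfst w.r D =
      ((λ_ M).inv ≫ (H.η ≫ H.δ) ▷ M ≫ (α_ D D M).hom) ≫ D ◁ w.r' ∧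
    D ◁ w.r ≫ (α_ D D M).inv ≫ (H.μ ≫ H.ε) ▷ M ≫ (λ_ M).hom =
      Wfst w.r' D ≫ M ◁ (H.μ ≫ H.ε) ≫ (ρ_ M).hom := by
  constructor
  · calc ((ρ_ M).inv ≫ M ◁ (H.η ≫ H.δ)) ≫ Wfst w.r D
        = unitHomR H.η M ≫ w.nabla ≫ M ◁ H.δ ≫ Wfst w.r D := by
          rw [w.nabla_whiskerLeft_δ_Wfst_r]
          simp only [unitHomR, MonoidalCategory.whiskerLeft_comp, Category.assoc]
      _ = unitHomL H.η M ≫ H.δ ▷ M ≫ (α_ D D M).hom ≫ D ◁ w.r' := by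
          rw [reassoc_of% w.unitHomR_comp_nabla, w.r'_whiskerLeft_δ_Wfst_r]
      _ = ((λ_ M).inv ≫ (H.η ≫ H.δ) ▷ M ≫ (α_ D D M).hom) ≫ D ◁ w.r' := by
          simp only [unitHomL, comp_whiskerRight, Category.assoc]
  · calc D ◁ w.r ≫ (α_ D D M).inv ≫ (H.μ ≫ H.ε) ▷ M ≫ (λ_ M).hom
        = Wfst w.r' D ≫ M ◁ H.μ ≫ w.r ≫ counitHomL H.ε M := by
          rw [reassoc_of% w.Wfst_r'_whiskerLeft_μ_r]
          simp only [counitHomL, comp_whiskerRight, Category.assoc]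
      _ = Wfst w.r' D ≫ M ◁ H.μ ≫ counitHomR H.ε M := by
          rw [← w.nabla_comp_counitHomR, reassoc_of% w.Wfst_r'_whiskerLeft_μ_nabla]
      _ = Wfst w.r' D ≫ M ◁ (H.μ ≫ H.ε) ≫ (ρ_ M).hom := by
          simp only [counitHomR, MonoidalCategory.whiskerLeft_comp, Category.assoc]
end

section
/- Let D be a weak braided Hopf algebra and let (M,φ_M) be a left D-module with an (M,D)-weak operator (r_M, r'_M, s_M, s'_M). Then φ_M = φ_M ∘ ∇_{s_M} if and only if φ_M ∘ s'_M ∘ (M⊗η_D) = id_M. -/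
open CategoryTheory MonoidalCategory

variable {C : Type*} [Category C] [MonoidalCategory C]

theorem unitHomL_comp_whiskerLeft {X M N : C} (e : 𝟙_ C ⟶ X) (f : M ⟶ N) :
    unitHomL e M ≫ X ◁ f = f ≫ unitHomL e N := by
  simp only [unitHomL, Category.assoc, ← whisker_exchange, leftUnitor_inv_naturality_assoc]

theorem whiskerLeft_comp_eq_iff_eq_id {X M : C} {e : 𝟙_ C ⟶ X} {φ : X ⊗ M ⟶ M}
    (hunit : unitHomL e M ≫ φ = 𝟙 M) (f : M ⟶ M) : X ◁ f ≫ φ = φ ↔ f = 𝟙 M := by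
  constructor
  · intro h
    calc f = f ≫ unitHomL e M ≫ φ := by rw [hunit, Category.comp_id]
      _ = (unitHomL e M ≫ X ◁ f) ≫ φ := by rw [unitHomL_comp_whiskerLeft, Category.assoc]
      _ = 𝟙 M := by rw [Category.assoc, h, hunit]
  · rintro rfl
    simp

theorem WeakOperator.s_comp_s'_comp_action {D : C} {H : WBHA D} {M : C} (w : WeakOperator H M)
    {φ : D ⊗ M ⟶ M} (hassoc : D ◁ φ ≫ φ = (α_ D D M).inv ≫ H.μ ▷ M ≫ φ) :
    (w.s ≫ w.s') ≫ φ = D ◁ (unitHomR H.η M ≫ w.s' ≫ φ) ≫ φ := by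
  rw [w.c33b]
  simp only [MonoidalCategory.whiskerLeft_comp, Category.assoc, ← hassoc]

/-- For a left `D`-module `(M,φ)` with an `(M,D)`-weak operator:
`φ = φ∘∇_{s}` iff `φ∘s'∘(M⊗η) = id_M`. -/
theorem module_nabla_s_iff {D : C} (H : WBHA D) (M : C) (w : WeakOperator H M)
    (φ : D ⊗ M ⟶ M)
    (hunit : unitHomL H.η M ≫ φ = 𝟙 M)
    (hassoc : D ◁ φ ≫ φ = (α_ D D M).inv ≫ H.μ ▷ M ≫ φ) :
    (w.s ≫ w.s') ≫ φ = φ ↔ unitHomR H.η M ≫ w.s' ≫ φ = 𝟙 M := by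
  rw [w.s_comp_s'_comp_action hassoc]
  exact whiskerLeft_comp_eq_iff_eq_id hunit _
end

section
/- Let D be a weak braided Hopf algebra and (M,φ_M) a left D-module with an (M,D)-weak operator compatible with the module structure. Then the morphism ∇_{M⊗M'} := (φ_M⊗φ_{M'})∘(D⊗s_M⊗M')∘((δ_D∘η_D)⊗M⊗M') on M⊗M' is idempotent, for any two left D-modules (M,φ_M), (M',φ_{M'}) equipped with compatible weak operators. -/
open CategoryTheory MonoidalCategory

variable {C : Type*} [Category C] [MonoidalCategory C]

section Compat

variable {D M : C}

/-- Compatibility of `a : M⊗D ⟶ D⊗M` with a left module structure `φ`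
(conditions (i-1), (i-3) of Definition 2.2). -/
def modCompatMD (t : D ⊗ D ⟶ D ⊗ D) (φ : D ⊗ M ⟶ M) (a : M ⊗ D ⟶ D ⊗ M) : Prop :=
  ((α_ D M D).inv ≫ φ ▷ D) ≫ a = D ◁ a ≫ Wfst t M ≫ D ◁ φ

/-- Compatibility of `b : D⊗M ⟶ M⊗D` with a left module structure `φ`
(conditions (i-2), (i-4) of Definition 2.2). -/
def modCompatDM (t : D ⊗ D ⟶ D ⊗ D) (φ : D ⊗ M ⟶ M) (b : D ⊗ M ⟶ M ⊗ D) : Prop :=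
  D ◁ φ ≫ b = Wfst t M ≫ D ◁ b ≫ (α_ D M D).inv ≫ φ ▷ D

/-- Compatibility of `a : M⊗D ⟶ D⊗M` with a left comodule structure `ϱ`
(conditions (ii-1), (ii-3) of Definition 2.2). -/
def comodCompatMD (t : D ⊗ D ⟶ D ⊗ D) (ϱ : M ⟶ D ⊗ M) (a : M ⊗ D ⟶ D ⊗ M) : Prop :=
  a ≫ D ◁ ϱ = (ϱ ▷ D ≫ (α_ D M D).hom) ≫ D ◁ a ≫ Wfst t M

/-- Compatibility of `b : D⊗M ⟶ M⊗D` with a left comodule structure `ϱ`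
(conditions (ii-2), (ii-4) of Definition 2.2). -/
def comodCompatDM (t : D ⊗ D ⟶ D ⊗ D) (ϱ : M ⟶ D ⊗ M) (b : D ⊗ M ⟶ M ⊗ D) : Prop :=
  b ≫ ϱ ▷ D ≫ (α_ D M D).hom = D ◁ ϱ ≫ Wfst t M ≫ D ◁ b

end Compat

variable {D : C} (H : WBHA D) (M : C) in
/-- A left-left Yetter-Drinfeld module over a weak braided Hopf algebra `D`:
a left `D`-module and left `D`-comodule equipped with an `(M,D)`-weak operator
compatible with the (co)module structures, satisfying (yd1) and (yd2). -/
structure YetterDrinfeld where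
  φ : D ⊗ M ⟶ M
  ϱ : M ⟶ D ⊗ M
  w : WeakOperator H M
  module_unit : unitHomL H.η M ≫ φ = 𝟙 M
  module_assoc : D ◁ φ ≫ φ = (α_ D D M).inv ≫ H.μ ▷ M ≫ φ
  comodule_counit : ϱ ≫ counitHomL H.ε M = 𝟙 M
  comodule_coassoc : ϱ ≫ D ◁ ϱ = ϱ ≫ H.δ ▷ M ≫ (α_ D D M).hom
  mod_r : modCompatMD H.t φ w.r
  mod_r' : modCompatDM H.t' φ w.r'
  mod_s : modCompatDM H.t φ w.s
  mod_s' : modCompatMD H.t' φ w.s'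
  comod_r : comodCompatMD H.t ϱ w.r
  comod_r' : comodCompatDM H.t' ϱ w.r'
  comod_s : comodCompatDM H.t ϱ w.s
  comod_s' : comodCompatMD H.t' ϱ w.s'
  yd1 : ϱ = unitHomL H.η M ≫ (H.δ ⊗ₘ ϱ) ≫ (α_ D D (D ⊗ M)).hom ≫
      D ◁ Wfst H.t M ≫ (α_ D D (D ⊗ M)).inv ≫ (H.μ ⊗ₘ φ)
  yd2 : (H.δ ⊗ₘ ϱ) ≫ (α_ D D (D ⊗ M)).hom ≫ D ◁ Wfst H.t M ≫
        (α_ D D (D ⊗ M)).inv ≫ (H.μ ⊗ₘ φ) =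
      (H.δ ▷ M ≫ (α_ D D M).hom) ≫ D ◁ w.s ≫ Wfst (φ ≫ ϱ) D ≫
        D ◁ w.r ≫ (α_ D D M).inv ≫ H.μ ▷ M


/-! The composite `(φM ⊗ φM') ∘ (D ⊗ s ⊗ M')` makes `M ⊗ M'` a module over `D ⊗ D` with the
product `(μ ⊗ μ) ∘ (D ⊗ t ⊗ D)`; the module-associativity of `φM`, `φM'`, condition (i-4) and
(c4-5) are exactly what this needs. By (b4) and the unit law, `δ ∘ η` is an idempotent of that
algebra: `(δη ⊗ δη) · (μ ⊗ μ)(D ⊗ t ⊗ D) = δ ∘ μ ∘ (η ⊗ η) = δ ∘ η`. Acting by an idempotent of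
the algebra, `∇_{M⊗M'}` is idempotent. -/

section TensorAction

variable {D M M' : C}

def braidedMul (t : D ⊗ D ⟶ D ⊗ D) (μ : D ⊗ D ⟶ D) : (D ⊗ D) ⊗ (D ⊗ D) ⟶ D ⊗ D :=
  (α_ D D (D ⊗ D)).hom ≫ D ◁ Wfst t D ≫ (α_ D D (D ⊗ D)).inv ≫ (μ ⊗ₘ μ)

def twistedAct (s : D ⊗ M ⟶ M ⊗ D) (φ : D ⊗ M ⟶ M) : (D ⊗ D) ⊗ M ⟶ M ⊗ D :=
  (α_ D D M).hom ≫ D ◁ s ≫ (α_ D M D).inv ≫ φ ▷ D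

def tensorAct (s : D ⊗ M ⟶ M ⊗ D) (φ : D ⊗ M ⟶ M) (φ' : D ⊗ M' ⟶ M') :
    (D ⊗ D) ⊗ (M ⊗ M') ⟶ M ⊗ M' :=
  (α_ D D (M ⊗ M')).hom ≫ D ◁ Wfst s M' ≫ (α_ D M (D ⊗ M')).inv ≫ (φ ⊗ₘ φ')

lemma tensorAct_eq (s : D ⊗ M ⟶ M ⊗ D) (φ : D ⊗ M ⟶ M) (φ' : D ⊗ M' ⟶ M') :
    tensorAct s φ φ' =
      (α_ (D ⊗ D) M M').inv ≫ twistedAct s φ ▷ M' ≫ (α_ M D M').hom ≫ M ◁ φ' := by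
  simp only [tensorAct, twistedAct, Wfst, MonoidalCategory.tensorHom_def]
  monoidal

lemma twistedAct_assoc {t : D ⊗ D ⟶ D ⊗ D} {μ : D ⊗ D ⟶ D} {s : D ⊗ M ⟶ M ⊗ D}
    {φ : D ⊗ M ⟶ M} (hs : modCompatDM t φ s)
    (hφ : D ◁ φ ≫ φ = (α_ D D M).inv ≫ μ ▷ M ≫ φ)
    (hμs : ((α_ D D M).inv ≫ μ ▷ M) ≫ s = D ◁ s ≫ Wfst s D ≫ M ◁ μ) :
    (D ⊗ D) ◁ twistedAct s φ ≫ (α_ (D ⊗ D) M D).inv ≫ twistedAct s φ ▷ D ≫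
        (α_ M D D).hom ≫ M ◁ μ =
      (α_ (D ⊗ D) (D ⊗ D) M).inv ≫ braidedMul t μ ▷ M ≫ twistedAct s φ := by
  calc _ = 𝟙 _ ⊗≫ D ◁ D ◁ D ◁ s ⊗≫ D ◁ (D ◁ φ ≫ s) ▷ D ⊗≫ φ ▷ D ▷ D ⊗≫ M ◁ μ := by
        simp only [twistedAct]; monoidal
    _ = 𝟙 _ ⊗≫ D ◁ ((D ⊗ D) ◁ s ≫ t ▷ (M ⊗ D)) ⊗≫ D ◁ D ◁ s ▷ D ⊗≫
          (D ◁ φ ≫ φ) ▷ D ▷ D ⊗≫ M ◁ μ := by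
        rw [hs]; simp only [Wfst]; monoidal
    _ = 𝟙 _ ⊗≫ D ◁ (t ▷ (D ⊗ M) ≫ (D ⊗ D) ◁ s) ⊗≫ D ◁ D ◁ s ▷ D ⊗≫ μ ▷ M ▷ D ▷ D ⊗≫
          (φ ▷ (D ⊗ D) ≫ M ◁ μ) := by
        rw [whisker_exchange, hφ]; monoidal
    _ = 𝟙 _ ⊗≫ D ◁ t ▷ (D ⊗ M) ⊗≫ (D ⊗ D) ◁ (D ◁ s ⊗≫ s ▷ D) ⊗≫
          (μ ▷ (M ⊗ (D ⊗ D)) ≫ D ◁ M ◁ μ) ⊗≫ φ ▷ D := by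
        rw [← whisker_exchange φ μ]; monoidal
    _ = 𝟙 _ ⊗≫ D ◁ t ▷ (D ⊗ M) ⊗≫ (D ⊗ D) ◁ (D ◁ s ≫ Wfst s D ≫ M ◁ μ) ⊗≫
          μ ▷ (M ⊗ D) ⊗≫ φ ▷ D := by
        rw [← whisker_exchange μ (M ◁ μ)]; simp only [Wfst]; monoidal
    _ = 𝟙 _ ⊗≫ D ◁ t ▷ (D ⊗ M) ⊗≫ (D ⊗ D) ◁ μ ▷ M ⊗≫
          ((D ⊗ D) ◁ s ≫ μ ▷ (M ⊗ D)) ⊗≫ φ ▷ D := by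
        rw [← hμs]; monoidal
    _ = _ := by
        rw [whisker_exchange μ s]
        simp only [braidedMul, twistedAct, Wfst, tensorHom_def']
        monoidal

lemma tensorAct_assoc {t : D ⊗ D ⟶ D ⊗ D} {μ : D ⊗ D ⟶ D} {s : D ⊗ M ⟶ M ⊗ D}
    {φ : D ⊗ M ⟶ M} {φ' : D ⊗ M' ⟶ M'} (hs : modCompatDM t φ s)
    (hφ : D ◁ φ ≫ φ = (α_ D D M).inv ≫ μ ▷ M ≫ φ)
    (hφ' : D ◁ φ' ≫ φ' = (α_ D D M').inv ≫ μ ▷ M' ≫ φ')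
    (hμs : ((α_ D D M).inv ≫ μ ▷ M) ≫ s = D ◁ s ≫ Wfst s D ≫ M ◁ μ) :
    (D ⊗ D) ◁ tensorAct s φ φ' ≫ tensorAct s φ φ' =
      (α_ (D ⊗ D) (D ⊗ D) (M ⊗ M')).inv ≫ braidedMul t μ ▷ (M ⊗ M') ≫ tensorAct s φ φ' := by
  simp only [tensorAct_eq]
  calc _ = 𝟙 _ ⊗≫ ((D ⊗ D) ◁ twistedAct s φ) ▷ M' ⊗≫
          (((D ⊗ D) ⊗ M) ◁ φ' ≫ twistedAct s φ ▷ M') ⊗≫ M ◁ φ' := by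
        monoidal
    _ = 𝟙 _ ⊗≫ ((D ⊗ D) ◁ twistedAct s φ) ▷ M' ⊗≫ twistedAct s φ ▷ (D ⊗ M') ⊗≫
          M ◁ (D ◁ φ' ≫ φ') := by
        rw [whisker_exchange]; monoidal
    _ = 𝟙 _ ⊗≫ ((D ⊗ D) ◁ twistedAct s φ ≫ (α_ (D ⊗ D) M D).inv ≫ twistedAct s φ ▷ D ≫
          (α_ M D D).hom ≫ M ◁ μ) ▷ M' ⊗≫ M ◁ φ' := by
        rw [hφ']; monoidal
    _ = _ := by
        rw [twistedAct_assoc hs hφ hμs]; monoidal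

end TensorAction

lemma act_idem_of_mul_idem {A X : C} {m : A ⊗ A ⟶ A} {e : 𝟙_ C ⟶ A} {ρ : A ⊗ X ⟶ X}
    (hρ : A ◁ ρ ≫ ρ = (α_ A A X).inv ≫ m ▷ X ≫ ρ)
    (he : (λ_ (𝟙_ C)).inv ≫ (e ⊗ₘ e) ≫ m = e) :
    ((λ_ X).inv ≫ e ▷ X ≫ ρ) ≫ ((λ_ X).inv ≫ e ▷ X ≫ ρ) = (λ_ X).inv ≫ e ▷ X ≫ ρ := by
  calc _ = (λ_ X).inv ≫ e ▷ X ≫ (λ_ (A ⊗ X)).inv ≫ e ▷ (A ⊗ X) ≫ A ◁ ρ ≫ ρ := by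
        simp only [Category.assoc]
        rw [leftUnitor_inv_naturality_assoc (f := ρ), whisker_exchange_assoc]
    _ = (λ_ X).inv ≫ ((λ_ (𝟙_ C)).inv ≫ (e ⊗ₘ e) ≫ m) ▷ X ≫ ρ := by
        rw [hρ, tensorHom_def']; monoidal
    _ = _ := by rw [he]

lemma WBHA.comul_unit_braidedMul_self {D : C} (H : WBHA D) :
    (λ_ (𝟙_ C)).inv ≫ ((H.η ≫ H.δ) ⊗ₘ (H.η ≫ H.δ)) ≫ braidedMul H.t H.μ = H.η ≫ H.δ := by
  have unit_mul_unit : (λ_ (𝟙_ C)).inv ≫ (H.η ⊗ₘ H.η) ≫ H.μ = H.η := by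
    calc _ = H.η ≫ unitHomR H.η D ≫ H.μ := by
          rw [unitHomR, MonoidalCategory.tensorHom_def]; monoidal
      _ = H.η := by rw [H.unit_r, Category.comp_id]
  calc _ = ((λ_ (𝟙_ C)).inv ≫ (H.η ⊗ₘ H.η) ≫ H.μ) ≫ H.δ := by
        rw [braidedMul, ← tensorHom_comp_tensorHom]
        simp only [Category.assoc]
        rw [← H.b4]
    _ = H.η ≫ H.δ := by rw [unit_mul_unit]

theorem nabla_tensor_idempotent_general {D : C} (H : WBHA D) (M M' : C)
    (w : WeakOperator H M)
    (φM : D ⊗ M ⟶ M) (φM' : D ⊗ M' ⟶ M')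
    (hMassoc : D ◁ φM ≫ φM = (α_ D D M).inv ≫ H.μ ▷ M ≫ φM)
    (hM'assoc : D ◁ φM' ≫ φM' = (α_ D D M').inv ≫ H.μ ▷ M' ≫ φM')
    (hMs : modCompatDM H.t φM w.s) :
    ((λ_ (M ⊗ M')).inv ≫ (H.η ≫ H.δ) ▷ (M ⊗ M') ≫ (α_ D D (M ⊗ M')).hom ≫
        D ◁ Wfst w.s M' ≫ (α_ D M (D ⊗ M')).inv ≫ (φM ⊗ₘ φM')) ≫
      ((λ_ (M ⊗ M')).inv ≫ (H.η ≫ H.δ) ▷ (M ⊗ M') ≫ (α_ D D (M ⊗ M')).hom ≫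
        D ◁ Wfst w.s M' ≫ (α_ D M (D ⊗ M')).inv ≫ (φM ⊗ₘ φM')) =
    (λ_ (M ⊗ M')).inv ≫ (H.η ≫ H.δ) ▷ (M ⊗ M') ≫ (α_ D D (M ⊗ M')).hom ≫
        D ◁ Wfst w.s M' ≫ (α_ D M (D ⊗ M')).inv ≫ (φM ⊗ₘ φM') :=
  act_idem_of_mul_idem (tensorAct_assoc hMs hMassoc hM'assoc w.c45) H.comul_unit_braidedMul_self

/-- For left `D`-modules `(M,φM)`, `(M',φM')` with weak operators compatible with
the module structures, the morphism
`∇_{M⊗M'} = (φM⊗φM')∘(D⊗s_M⊗M')∘((δ∘η)⊗M⊗M')` is idempotent. -/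
theorem nabla_tensor_idempotent {D : C} (H : WBHA D) (M M' : C)
    (w : WeakOperator H M) (w' : WeakOperator H M')
    (φM : D ⊗ M ⟶ M) (φM' : D ⊗ M' ⟶ M')
    (hMunit : unitHomL H.η M ≫ φM = 𝟙 M)
    (hMassoc : D ◁ φM ≫ φM = (α_ D D M).inv ≫ H.μ ▷ M ≫ φM)
    (hM'unit : unitHomL H.η M' ≫ φM' = 𝟙 M')
    (hM'assoc : D ◁ φM' ≫ φM' = (α_ D D M').inv ≫ H.μ ▷ M' ≫ φM')
    (hMr : modCompatMD H.t φM w.r) (hMr' : modCompatDM H.t' φM w.r')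
    (hMs : modCompatDM H.t φM w.s) (hMs' : modCompatMD H.t' φM w.s')
    (hM'r : modCompatMD H.t φM' w'.r) (hM'r' : modCompatDM H.t' φM' w'.r')
    (hM's : modCompatDM H.t φM' w'.s) (hM's' : modCompatMD H.t' φM' w'.s') :
    ((λ_ (M ⊗ M')).inv ≫ (H.η ≫ H.δ) ▷ (M ⊗ M') ≫ (α_ D D (M ⊗ M')).hom ≫
        D ◁ Wfst w.s M' ≫ (α_ D M (D ⊗ M')).inv ≫ (φM ⊗ₘ φM')) ≫
      ((λ_ (M ⊗ M')).inv ≫ (H.η ≫ H.δ) ▷ (M ⊗ M') ≫ (α_ D D (M ⊗ M')).hom ≫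
        D ◁ Wfst w.s M' ≫ (α_ D M (D ⊗ M')).inv ≫ (φM ⊗ₘ φM')) =
    (λ_ (M ⊗ M')).inv ≫ (H.η ≫ H.δ) ▷ (M ⊗ M') ≫ (α_ D D (M ⊗ M')).hom ≫
        D ◁ Wfst w.s M' ≫ (α_ D M (D ⊗ M')).inv ≫ (φM ⊗ₘ φM') :=
  nabla_tensor_idempotent_general H M M' w φM φM' hMassoc hM'assoc hMs
end
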